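/- For every ε > 0, m > 0, and each fixed μ ∈ ℤ₊, the series Σ_{λ=1}^∞ b₁(λ,μ,m,ε)² converges to 1. -/

import Mathlib

/-!
Write `c = (1 + m²ε²)^(-1/2)`. Splitting the paths by their last move, the amplitude after
`k + 1` moves is `c^k (Q + iP)`, where the real pair `(P, Q)` obeys the lattice Dirac equation.
In the coordinates `(λ, μ)` this equation is a rotation: for `f = b₁(·, μ)`, `g = b₂(·, μ)` and
`f' = b₁(·, μ + 1)` we have `f' λ = c f λ + c m ε g λ`, `g (λ + 1) = c g λ - c m ε f λ`, and
`c² + (c m ε)² = 1`. Hence `f' λ² + g (λ + 1)² = f λ² + g λ²`. Telescoping, and using that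
`g λ → 0` (a contraction with `|c| < 1` driven by `f λ → 0`), gives `∑ f'² = ∑ f² + g 1²`.
Finally `b₁(·, 0) = 0`, `b₂(1, 0) = 1` and `b₂(1, μ) = 0` for `μ ≥ 1`.
-/

noncomputable section

/-- The `i`-th move of a checker path encoded as `f : Fin n → Bool`
(`true` = upwards-right move `(ε,ε)`, `false` = upwards-left move `(−ε,ε)`);
out-of-range indices default to `true`. -/
def fcStep {n : ℕ} (f : Fin n → Bool) (i : ℕ) : Bool :=
  if h : i < n then f ⟨i, h⟩ else true

/-- The number of turns of the checker path `f`. -/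
def fcTurns {n : ℕ} (f : Fin n → Bool) : ℕ :=
  ((Finset.range (n - 1)).filter fun i => fcStep f i ≠ fcStep f (i + 1)).card

/-- The position (in units of `ε`) of the checker path `f` after `i` moves,
starting from the origin. -/
def fcPos {n : ℕ} (f : Fin n → Bool) (i : ℕ) : ℤ :=
  ∑ j ∈ Finset.range i, (if fcStep f j then (1 : ℤ) else -1)

/-- Checker paths from `(0,0)` to `(εx, εn)` whose first step is to `(ε,ε)`. -/
def fcPaths (n : ℕ) (x : ℤ) : Finset (Fin n → Bool) :=
  Finset.univ.filter fun f =>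
    (∀ i : Fin n, (i : ℕ) = 0 → f i = true) ∧ fcPos f n = x

/-- The amplitude `a(εx, εn, m, ε)`. -/
def fcAmp (m ε : ℝ) (x : ℤ) (n : ℕ) : ℂ :=
  (((1 + m ^ 2 * ε ^ 2) ^ ((1 - (n : ℝ)) / 2) : ℝ) : ℂ) * Complex.I *
    ∑ f ∈ fcPaths n x, (-Complex.I * (m * ε)) ^ fcTurns f

/-- The probability `P(εx, εn, m, ε)` to find the electron at `(εx, εn)`. -/
def fcP (m ε : ℝ) (x : ℤ) (n : ℕ) : ℝ := ‖fcAmp m ε x n‖ ^ 2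

/-- `b(λ,μ,m,ε) := a(ε(λ−μ), ε(λ+μ), m, ε)`. -/
def fcB (m ε : ℝ) (lam mu : ℕ) : ℂ := fcAmp m ε ((lam : ℤ) - (mu : ℤ)) (lam + mu)


open Filter Topology Complex

theorem tendsto_zero_of_le_mul_add {r : ℝ} {u v : ℕ → ℝ} (hr₀ : 0 ≤ r) (hr : r < 1)
    (hu : ∀ k, 0 ≤ u k) (hstep : ∀ k, u (k + 1) ≤ r * u k + v k)
    (hv : Tendsto v atTop (𝓝 0)) : Tendsto u atTop (𝓝 0) := by
  rw [Metric.tendsto_atTop]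
  intro δ hδ
  obtain ⟨N, hN⟩ := Metric.tendsto_atTop.1 hv ((1 - r) * δ / 2) (by nlinarith)
  have hbound : ∀ j, u (N + j) ≤ δ / 2 + r ^ j * u N := by
    intro j
    induction j with
    | zero => simp only [add_zero, pow_zero, one_mul]; linarith
    | succ j ih =>
      have hvN : v (N + j) < (1 - r) * δ / 2 :=
        (abs_lt.1 (hN (N + j) (by omega))).2.trans_eq' (by simp)
      calc u (N + (j + 1)) ≤ r * u (N + j) + v (N + j) := hstep _
        _ ≤ r * (δ / 2 + r ^ j * u N) + (1 - r) * δ / 2 := by gcongr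
        _ = δ / 2 + r ^ (j + 1) * u N := by ring
  have hgeom : Tendsto (fun j => r ^ j * u N) atTop (𝓝 0) := by
    simpa using (tendsto_pow_atTop_nhds_zero_of_lt_one hr₀ hr).mul_const (u N)
  obtain ⟨J, hJ⟩ := (hgeom.eventually (gt_mem_nhds (half_pos hδ))).exists
  refine ⟨N + J, fun n hn => ?_⟩
  obtain ⟨j, rfl⟩ := Nat.exists_eq_add_of_le hn
  rw [Real.dist_eq, sub_zero, abs_of_nonneg (hu _)]
  calc u (N + J + j) ≤ δ / 2 + r ^ (J + j) * u N := by rw [add_assoc]; exact hbound _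
    _ ≤ δ / 2 + r ^ J * u N := by
      gcongr _ + ?_
      exact mul_le_mul_of_nonneg_right (pow_le_pow_of_le_one hr₀ hr.le (by omega)) (hu N)
    _ < δ := by linarith

theorem hasSum_sq_of_rotation {a b s : ℝ} {f g f' : ℕ → ℝ} (hab : a ^ 2 + b ^ 2 = 1)
    (ha : |a| < 1) (hf' : ∀ k, f' k = a * f k + b * g k)
    (hg : ∀ k, g (k + 1) = a * g k - b * f k) (hf : HasSum (fun k => f k ^ 2) s) :
    HasSum (fun k => f' k ^ 2) (s + g 0 ^ 2) := by
  have hconserve : ∀ k, f' k ^ 2 = f k ^ 2 - (g (k + 1) ^ 2 - g k ^ 2) := fun k => by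
    rw [hf', hg]; linear_combination (f k ^ 2 + g k ^ 2) * hab
  have hpartial : ∀ N, ∑ k ∈ Finset.range N, f' k ^ 2
      = ∑ k ∈ Finset.range N, f k ^ 2 + g 0 ^ 2 - g N ^ 2 := fun N => by
    rw [Finset.sum_congr rfl fun k _ => hconserve k, Finset.sum_sub_distrib,
      Finset.sum_range_sub (fun k => g k ^ 2)]
    ring
  have hf0 : Tendsto (fun k => |f k|) atTop (𝓝 0) := by
    have := (Real.continuous_sqrt.tendsto 0).comp hf.summable.tendsto_atTop_zero
    simpa [Function.comp_def, Real.sqrt_sq_eq_abs] using this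
  have hg0 : Tendsto (fun k => |g k|) atTop (𝓝 0) := by
    refine tendsto_zero_of_le_mul_add (abs_nonneg a) ha (fun k => abs_nonneg _)
      (fun k => ?_) (by simpa using hf0.const_mul |b|)
    rw [hg, ← abs_mul, ← abs_mul]
    exact abs_sub _ _
  rw [hasSum_iff_tendsto_nat_of_nonneg (fun k => sq_nonneg _), funext hpartial]
  simpa using (hf.tendsto_sum_nat.add_const (g 0 ^ 2)).sub (hg0.pow 2)

lemma fcStep_snoc {n : ℕ} (g : Fin n → Bool) (b : Bool) (i : ℕ) :
    fcStep (Fin.snoc g b : Fin (n + 1) → Bool) i = if i = n then b else fcStep g i := by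
  unfold fcStep
  split_ifs with h1 h2 h3 h3 <;> try omega
  · subst h2; simp [Fin.snoc]
  · simp [Fin.snoc, h3]
  · rfl

lemma fcStep_zero_eq_true_iff {n : ℕ} (f : Fin n → Bool) :
    fcStep f 0 = true ↔ ∀ i : Fin n, (i : ℕ) = 0 → f i = true := by
  unfold fcStep
  split_ifs with h
  · exact ⟨fun hf i hi => by rwa [show i = ⟨0, h⟩ from Fin.ext hi], fun hf => hf _ rfl⟩
  · exact ⟨fun _ i => by omega, fun _ => rfl⟩

lemma mem_fcPaths_iff {n : ℕ} {x : ℤ} {f : Fin n → Bool} :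
    f ∈ fcPaths n x ↔ fcStep f 0 = true ∧ fcPos f n = x := by
  simp [fcPaths, fcStep_zero_eq_true_iff]

lemma fcPos_snoc {n : ℕ} (g : Fin n → Bool) (b : Bool) :
    fcPos (Fin.snoc g b : Fin (n + 1) → Bool) (n + 1) = fcPos g n + if b then 1 else -1 := by
  unfold fcPos
  rw [Finset.sum_range_succ, fcStep_snoc, if_pos rfl]
  congr 1
  refine Finset.sum_congr rfl fun i hi => ?_
  rw [fcStep_snoc, if_neg (Finset.mem_range.1 hi).ne]

lemma fcTurns_snoc {k : ℕ} (g : Fin (k + 1) → Bool) (b : Bool) :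
    fcTurns (Fin.snoc g b : Fin (k + 2) → Bool)
      = fcTurns g + if fcStep g k = b then 0 else 1 := by
  have hprefix : (Finset.range k).filter
        (fun i => fcStep (Fin.snoc g b : Fin (k + 2) → Bool) i ≠ fcStep (Fin.snoc g b) (i + 1))
      = (Finset.range k).filter (fun i => fcStep g i ≠ fcStep g (i + 1)) := by
    refine Finset.filter_congr fun i hi => ?_
    have := Finset.mem_range.1 hi
    rw [fcStep_snoc, fcStep_snoc, if_neg (by omega), if_neg (by omega)]
  have hlast : fcStep (Fin.snoc g b : Fin (k + 2) → Bool) k ≠ fcStep (Fin.snoc g b) (k + 1)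
      ↔ ¬ fcStep g k = b := by
    rw [fcStep_snoc, fcStep_snoc, if_neg (by omega), if_pos rfl]
  unfold fcTurns
  rw [show k + 2 - 1 = k + 1 from rfl, show k + 1 - 1 = k from rfl, Finset.range_add_one,
    Finset.filter_insert, hprefix]
  by_cases hb : fcStep g k = b
  · rw [if_neg (hlast.not.2 (not_not.2 hb)), if_pos hb, add_zero]
  · rw [if_pos (hlast.2 hb), if_neg hb, Finset.card_insert_of_notMem (by simp)]

lemma snoc_mem_fcPaths_iff {k : ℕ} {x : ℤ} (g : Fin (k + 1) → Bool) (b : Bool) :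
    (Fin.snoc g b : Fin (k + 2) → Bool) ∈ fcPaths (k + 2) x ↔
      g ∈ fcPaths (k + 1) (x - if b then 1 else -1) := by
  rw [mem_fcPaths_iff, mem_fcPaths_iff, fcPos_snoc, fcStep_snoc, if_neg (by omega)]
  constructor <;> rintro ⟨h0, hx⟩ <;> exact ⟨h0, by omega⟩

def fcSumLastMove (m ε : ℝ) (n : ℕ) (x : ℤ) (b : Bool) : ℂ :=
  ∑ f ∈ (fcPaths n x).filter (fun f => fcStep f (n - 1) = b), (-I * (m * ε)) ^ fcTurns f

lemma sum_fcPaths_eq_fcSumLastMove (m ε : ℝ) (n : ℕ) (x : ℤ) :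
    ∑ f ∈ fcPaths n x, (-I * (m * ε)) ^ fcTurns f
      = fcSumLastMove m ε n x true + fcSumLastMove m ε n x false := by
  rw [fcSumLastMove, fcSumLastMove,
    ← Finset.sum_filter_add_sum_filter_not _ (fun f => fcStep f (n - 1) = true)]
  simp only [Bool.not_eq_true]

lemma fcSumLastMove_succ (m ε : ℝ) (k : ℕ) (x : ℤ) (b : Bool) :
    fcSumLastMove m ε (k + 2) x b
      = fcSumLastMove m ε (k + 1) (x - if b then 1 else -1) b
        + -I * (m * ε) * fcSumLastMove m ε (k + 1) (x - if b then 1 else -1) (!b) := by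
  set y := x - if b then 1 else -1
  have hsnoc : ∀ f ∈ (fcPaths (k + 2) x).filter (fun f => fcStep f (k + 1) = b),
      Fin.snoc (Fin.init f) b = f := by
    intro f hf
    have hlast : f (Fin.last (k + 1)) = b := by
      have := (Finset.mem_filter.1 hf).2
      rwa [fcStep, dif_pos (by omega)] at this
    conv_rhs => rw [← Fin.snoc_init_self f, hlast]
  have hdrop : fcSumLastMove m ε (k + 2) x b
      = ∑ g ∈ fcPaths (k + 1) y,
          (-I * (m * ε)) ^ (fcTurns g + if fcStep g k = b then 0 else 1) := by
    refine Finset.sum_nbij' Fin.init (fun g => Fin.snoc g b) (fun f hf => ?_) (fun g hg => ?_)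
      hsnoc (fun g _ => Fin.init_snoc _ _) (fun f hf => ?_)
    · rw [← snoc_mem_fcPaths_iff, hsnoc f hf]
      exact (Finset.mem_filter.1 hf).1
    · refine Finset.mem_filter.2 ⟨(snoc_mem_fcPaths_iff g b).2 hg, ?_⟩
      exact (fcStep_snoc g b (k + 1)).trans (if_pos rfl)
    · conv_lhs => rw [← hsnoc f hf]
      rw [fcTurns_snoc]
  rw [hdrop, ← Finset.sum_filter_add_sum_filter_not _ (fun g => fcStep g k = b),
    fcSumLastMove, fcSumLastMove, Nat.add_sub_cancel, Finset.mul_sum]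
  congr 1
  · refine Finset.sum_congr rfl fun g hg => ?_
    rw [if_pos (Finset.mem_filter.1 hg).2, add_zero]
  · refine Finset.sum_congr (Finset.filter_congr fun g _ => by cases b <;> simp) fun g hg => ?_
    rw [if_neg (by rw [(Finset.mem_filter.1 hg).2]; cases b <;> decide), pow_succ, mul_comm]

-- The real form of `fcSumLastMove_succ`, i.e. the lattice Dirac equation.
def fcDirac (m ε : ℝ) : ℕ → ℤ → ℝ × ℝ
  | 0, x => (if x = 1 then 1 else 0, 0)
  | k + 1, x => ((fcDirac m ε k (x - 1)).1 - m * ε * (fcDirac m ε k (x - 1)).2,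
      m * ε * (fcDirac m ε k (x + 1)).1 + (fcDirac m ε k (x + 1)).2)

lemma fcDirac_eq_zero {m ε : ℝ} {k : ℕ} {x : ℤ} (hx : x + k ≤ -1 ∨ k + 2 ≤ x) :
    fcDirac m ε k x = 0 := by
  induction k generalizing x with
  | zero =>
    simp only [fcDirac, Prod.mk_eq_zero, and_true]
    exact if_neg (by omega)
  | succ k ih =>
    simp only [fcDirac, Prod.mk_eq_zero]
    rw [ih (by omega), ih (by omega)]
    simp

lemma fcSumLastMove_one (m ε : ℝ) (x : ℤ) (b : Bool) :
    fcSumLastMove m ε 1 x b = if b = true ∧ x = 1 then 1 else 0 := by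
  have hstep (c : Bool) : fcStep ((Equiv.funUnique (Fin 1) Bool).symm c) 0 = c := rfl
  have hpos (c : Bool) :
      fcPos ((Equiv.funUnique (Fin 1) Bool).symm c) 1 = if c then 1 else -1 := by
    rw [fcPos, Finset.sum_range_one, hstep]
  have hturns (f : Fin 1 → Bool) : fcTurns f = 0 := rfl
  rw [fcSumLastMove, Finset.sum_filter, fcPaths, Finset.sum_filter,
    ← (Equiv.funUnique (Fin 1) Bool).symm.sum_comp, Fintype.sum_bool]
  simp only [← fcStep_zero_eq_true_iff, hstep, hpos, hturns, Nat.sub_self, pow_zero]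
  by_cases hx : x = 1 <;> cases b <;> simp [hx, eq_comm]

lemma fcSumLastMove_eq_fcDirac (m ε : ℝ) (k : ℕ) (x : ℤ) :
    fcSumLastMove m ε (k + 1) x true = (fcDirac m ε k x).1 ∧
      fcSumLastMove m ε (k + 1) x false = -I * (fcDirac m ε k x).2 := by
  induction k generalizing x with
  | zero => by_cases hx : x = 1 <;> simp [fcSumLastMove_one, fcDirac, hx]
  | succ k ih =>
    constructor
    · rw [fcSumLastMove_succ]
      simp only [if_true, Bool.not_true]
      rw [(ih _).1, (ih _).2]
      simp only [fcDirac]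
      push_cast
      linear_combination (m * ε * (fcDirac m ε k (x - 1)).2 : ℂ) * I_sq
    · rw [fcSumLastMove_succ]
      simp only [Bool.false_eq_true, if_false, Bool.not_false, sub_neg_eq_add]
      rw [(ih _).1, (ih _).2]
      simp only [fcDirac]
      push_cast
      ring

def fcScale (m ε : ℝ) : ℝ := (1 + m ^ 2 * ε ^ 2) ^ (-(1 : ℝ) / 2)

lemma fcScale_pos (m ε : ℝ) : 0 < fcScale m ε := by
  unfold fcScale; positivity

lemma fcScale_lt_one {m ε : ℝ} (h : m * ε ≠ 0) : fcScale m ε < 1 :=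
  Real.rpow_lt_one_of_one_lt_of_neg
    (lt_add_of_pos_right 1 (by simpa [mul_pow] using sq_pos_of_ne_zero h)) (by norm_num)

lemma fcScale_sq_add_sq (m ε : ℝ) : fcScale m ε ^ 2 + (fcScale m ε * (m * ε)) ^ 2 = 1 := by
  have hpos : (0 : ℝ) < 1 + m ^ 2 * ε ^ 2 := by positivity
  have hsq : fcScale m ε ^ 2 = (1 + m ^ 2 * ε ^ 2)⁻¹ := by
    rw [fcScale, ← Real.rpow_natCast _ 2, ← Real.rpow_mul hpos.le, ← Real.rpow_neg_one]
    norm_num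
  rw [mul_pow, hsq]
  field_simp

lemma fcAmp_succ (m ε : ℝ) (k : ℕ) (x : ℤ) :
    fcAmp m ε x (k + 1)
      = ((fcScale m ε ^ k : ℝ) : ℂ) * ((fcDirac m ε k x).2 + (fcDirac m ε k x).1 * I) := by
  have hscale : (1 + m ^ 2 * ε ^ 2) ^ ((1 - ((k + 1 : ℕ) : ℝ)) / 2) = fcScale m ε ^ k := by
    rw [fcScale, ← Real.rpow_natCast _ k, ← Real.rpow_mul (by positivity)]
    push_cast
    ring_nf
  rw [fcAmp, hscale, sum_fcPaths_eq_fcSumLastMove, (fcSumLastMove_eq_fcDirac m ε k x).1,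
    (fcSumLastMove_eq_fcDirac m ε k x).2, mul_assoc]
  linear_combination -((fcScale m ε ^ k : ℝ) : ℂ) * (fcDirac m ε k x).2 * I_sq

lemma fcB_re (m ε : ℝ) (k mu : ℕ) :
    (fcB m ε (k + 1) mu).re
      = fcScale m ε ^ (k + mu) * (fcDirac m ε (k + mu) (k + 1 - mu)).2 := by
  rw [fcB, show k + 1 + mu = k + mu + 1 by omega, fcAmp_succ, Complex.re_ofReal_mul]
  simp

lemma fcB_im (m ε : ℝ) (k mu : ℕ) :
    (fcB m ε (k + 1) mu).im
      = fcScale m ε ^ (k + mu) * (fcDirac m ε (k + mu) (k + 1 - mu)).1 := by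
  rw [fcB, show k + 1 + mu = k + mu + 1 by omega, fcAmp_succ, Complex.im_ofReal_mul]
  simp

lemma fcB_re_succ_right (m ε : ℝ) (mu k : ℕ) :
    (fcB m ε (k + 1) (mu + 1)).re
      = fcScale m ε * (fcB m ε (k + 1) mu).re
        + fcScale m ε * (m * ε) * (fcB m ε (k + 1) mu).im := by
  rw [fcB_re, fcB_re, fcB_im, show k + (mu + 1) = k + mu + 1 by omega, fcDirac]
  push_cast
  ring_nf

lemma fcB_im_succ_left (m ε : ℝ) (mu k : ℕ) :
    (fcB m ε (k + 1 + 1) mu).im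
      = fcScale m ε * (fcB m ε (k + 1) mu).im
        - fcScale m ε * (m * ε) * (fcB m ε (k + 1) mu).re := by
  rw [fcB_im, fcB_im, fcB_re, show k + 1 + mu = k + mu + 1 by omega, fcDirac]
  push_cast
  ring_nf

lemma fcB_re_zero_right (m ε : ℝ) (k : ℕ) : (fcB m ε (k + 1) 0).re = 0 := by
  rw [fcB_re]
  cases k with
  | zero => simp [fcDirac]
  | succ k =>
    rw [fcDirac,
      fcDirac_eq_zero (x := ((k + 1 : ℕ) : ℤ) + 1 - ((0 : ℕ) : ℤ) + 1) (by omega)]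
    simp

lemma fcB_im_one_zero (m ε : ℝ) : (fcB m ε 1 0).im = 1 := by
  simp [fcB_im, fcDirac]

lemma fcB_im_one_succ (m ε : ℝ) (mu : ℕ) : (fcB m ε 1 (mu + 1)).im = 0 := by
  rw [fcB_im, zero_add, fcDirac,
    fcDirac_eq_zero (x := ((0 : ℕ) : ℤ) + 1 - ((mu + 1 : ℕ) : ℤ) - 1) (by omega)]
  simp

lemma hasSum_fcB_re_sq_succ_right {m ε s : ℝ} (hmε : m * ε ≠ 0) {mu : ℕ}
    (h : HasSum (fun k : ℕ => (fcB m ε (k + 1) mu).re ^ 2) s) :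
    HasSum (fun k : ℕ => (fcB m ε (k + 1) (mu + 1)).re ^ 2) (s + (fcB m ε 1 mu).im ^ 2) :=
  hasSum_sq_of_rotation (fcScale_sq_add_sq m ε)
    (by rw [abs_of_pos (fcScale_pos m ε)]; exact fcScale_lt_one hmε)
    (fcB_re_succ_right m ε mu) (fcB_im_succ_left m ε mu) h

/-- For fixed `μ ∈ ℤ₊`, the series `Σ_{λ=1}^∞ b₁(λ,μ,m,ε)²` converges to `1`. -/
theorem stmt8 (m ε : ℝ) (hε : 0 < ε) (hm : 0 < m) (mu : ℕ) (hmu : 1 ≤ mu) :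
    HasSum (fun k : ℕ => (fcB m ε (k + 1) mu).re ^ 2) 1 := by
  have hmε : m * ε ≠ 0 := (mul_pos hm hε).ne'
  obtain ⟨mu, rfl⟩ := Nat.exists_eq_add_of_le' hmu
  clear hmu
  induction mu with
  | zero =>
    have h0 : HasSum (fun k : ℕ => (fcB m ε (k + 1) 0).re ^ 2) 0 := by
      simp [fcB_re_zero_right, hasSum_zero]
    simpa [fcB_im_one_zero] using hasSum_fcB_re_sq_succ_right hmε h0
  | succ mu ih => simpa [fcB_im_one_succ] using hasSum_fcB_re_sq_succ_right hmε ih
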